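/- arXiv:2009.12170 — 2 statements merged into one kernel-verified Lean document; each statement's English description precedes it below -/
import Mathlib

section
/- Let T be an invertible m×m real matrix whose off-diagonal entries are nonnegative and whose row sums are nonpositive (Te ≤ 0 entrywise, where e is the all-ones column vector), and let α be a row vector with nonnegative entries and α·e ≤ 1. Then α exp(xT) e → 0 as x → ∞; consequently the C-PH distribution function F(x) = 1 − α exp(xT) e tends to 1 as x → ∞. -/
open Matrix Filter Nat

/-- Powers of entrywise-nonnegative matrices are entrywise nonnegative. -/
lemma pow_entry_nonneg {m : ℕ} (A : Matrix (Fin m) (Fin m) ℝ)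
    (hA : ∀ i j, 0 ≤ A i j) (n : ℕ) : ∀ i j, 0 ≤ (A ^ n) i j := by
  induction n with
  | zero => intro i j; simp [Matrix.one_apply]; positivity
  | succ n ih =>
    intro i j
    rw [pow_succ, Matrix.mul_apply]
    exact Finset.sum_nonneg fun k _ => mul_nonneg (ih i k) (hA k j)

/-- The exponential of an entrywise-nonnegative matrix is entrywise nonnegative. -/
lemma exp_entry_nonneg {m : ℕ} (A : Matrix (Fin m) (Fin m) ℝ)
    (hA : ∀ i j, 0 ≤ A i j) : ∀ i j, 0 ≤ (NormedSpace.exp A) i j := by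
  intro i j
  have hs : HasSum (fun n : ℕ => (((n ! : ℝ)))⁻¹ • A ^ n) (NormedSpace.exp A) := by
    letI : SeminormedRing (Matrix (Fin m) (Fin m) ℝ) := Matrix.linftyOpSemiNormedRing
    letI : NormedRing (Matrix (Fin m) (Fin m) ℝ) := Matrix.linftyOpNormedRing
    letI : NormedAlgebra ℝ (Matrix (Fin m) (Fin m) ℝ) := Matrix.linftyOpNormedAlgebra
    exact NormedSpace.exp_series_hasSum_exp' (𝕂 := ℝ) A
  have hs' : HasSum (fun n : ℕ => ((((n ! : ℝ)))⁻¹ • A ^ n) i j) ((NormedSpace.exp A) i j) :=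
    hs.map ({ toFun := fun M => M i j, map_zero' := rfl, map_add' := fun _ _ => rfl } :
      Matrix (Fin m) (Fin m) ℝ →+ ℝ)
      (show Continuous fun M : Matrix (Fin m) (Fin m) ℝ => M i j from
        Continuous.comp (continuous_apply j) (continuous_apply (A := fun _ : Fin m => Fin m → ℝ) i))
  rw [← hs'.tsum_eq]
  apply tsum_nonneg
  intro n
  have := pow_entry_nonneg A hA n i j
  simp only [Matrix.smul_apply, smul_eq_mul]
  positivity

/-- `exp (x • T)` is entrywise nonnegative for `x ≥ 0` and Metzler `T`. -/
lemma exp_smul_entry_nonneg {m : ℕ} (T : Matrix (Fin m) (Fin m) ℝ)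
    (hmetzler : ∀ i j, i ≠ j → 0 ≤ T i j) {x : ℝ} (hx : 0 ≤ x) :
    ∀ i j, 0 ≤ (NormedSpace.exp (x • T)) i j := by
  intro i j
  set c : ℝ := ∑ k, |T k k| with hc
  have hcT : ∀ k, -T k k ≤ c := by
    intro k
    calc -T k k ≤ |T k k| := neg_le_abs _
    _ ≤ c := Finset.single_le_sum (f := fun k => |T k k|) (fun _ _ => abs_nonneg _)
        (Finset.mem_univ k)
  set S : Matrix (Fin m) (Fin m) ℝ := T + c • 1 with hS
  have hSnn : ∀ i j, 0 ≤ S i j := by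
    intro a b
    by_cases hab : a = b
    · subst hab
      simp [hS, Matrix.add_apply, Matrix.smul_apply, Matrix.one_apply]
      linarith [hcT a]
    · simp [hS, Matrix.add_apply, Matrix.smul_apply, Matrix.one_apply, hab]
      exact hmetzler a b hab
  have hsplit : x • T = (algebraMap ℝ (Matrix (Fin m) (Fin m) ℝ) (-(x * c))) + x • S := by
    rw [Algebra.algebraMap_eq_smul_one]
    rw [hS, smul_add, smul_smul]
    module
  have hcomm : Commute (algebraMap ℝ (Matrix (Fin m) (Fin m) ℝ) (-(x * c))) (x • S) :=
    (Algebra.commutes _ _)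
  have hexp : NormedSpace.exp (x • T)
      = NormedSpace.exp (algebraMap ℝ (Matrix (Fin m) (Fin m) ℝ) (-(x * c)))
        * NormedSpace.exp (x • S) := by
    rw [hsplit]
    exact Matrix.exp_add_of_commute _ _ hcomm
  have halg : NormedSpace.exp (algebraMap ℝ (Matrix (Fin m) (Fin m) ℝ) (-(x * c)))
      = algebraMap ℝ (Matrix (Fin m) (Fin m) ℝ) (Real.exp (-(x * c))) := by
    letI : SeminormedRing (Matrix (Fin m) (Fin m) ℝ) := Matrix.linftyOpSemiNormedRing
    letI : NormedRing (Matrix (Fin m) (Fin m) ℝ) := Matrix.linftyOpNormedRing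
    letI : NormedAlgebra ℝ (Matrix (Fin m) (Fin m) ℝ) := Matrix.linftyOpNormedAlgebra
    rw [Real.exp_eq_exp_ℝ]
    exact (NormedSpace.algebraMap_exp_comm (-(x * c))).symm
  have hkey : NormedSpace.exp (x • T) = Real.exp (-(x * c)) • NormedSpace.exp (x • S) := by
    rw [hexp, halg, ← Algebra.smul_def]
  rw [hkey, Matrix.smul_apply, smul_eq_mul]
  have h2 : ∀ a b, 0 ≤ (x • S) a b := by
    intro a b
    rw [Matrix.smul_apply, smul_eq_mul]
    exact mul_nonneg hx (hSnn a b)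
  exact mul_nonneg (Real.exp_nonneg _) (exp_entry_nonneg _ h2 i j)

/-- `T` commutes with `exp (x • T)`. -/
lemma exp_comm_T {m : ℕ} (T : Matrix (Fin m) (Fin m) ℝ) (x : ℝ) :
    NormedSpace.exp (x • T) * T = T * NormedSpace.exp (x • T) := by
  letI : SeminormedRing (Matrix (Fin m) (Fin m) ℝ) := Matrix.linftyOpSemiNormedRing
  letI : NormedRing (Matrix (Fin m) (Fin m) ℝ) := Matrix.linftyOpNormedRing
  letI : NormedAlgebra ℝ (Matrix (Fin m) (Fin m) ℝ) := Matrix.linftyOpNormedAlgebra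
  exact (((Commute.refl T).smul_right x).exp_right).symm

/-- The entries of `exp (x • T) e` are differentiable in `x` with the expected derivative. -/
lemma hasDerivAt_exp_entry {m : ℕ} (T : Matrix (Fin m) (Fin m) ℝ) (i : Fin m) (x : ℝ) :
    HasDerivAt (fun t : ℝ => ((NormedSpace.exp (t • T)) *ᵥ (fun _ => (1:ℝ))) i)
      (((NormedSpace.exp (x • T) * T) *ᵥ (fun _ => (1:ℝ))) i) x := by
  letI : SeminormedRing (Matrix (Fin m) (Fin m) ℝ) := Matrix.linftyOpSemiNormedRing
  letI : NormedRing (Matrix (Fin m) (Fin m) ℝ) := Matrix.linftyOpNormedRing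
  letI : NormedAlgebra ℝ (Matrix (Fin m) (Fin m) ℝ) := Matrix.linftyOpNormedAlgebra
  have hd : HasDerivAt (fun t : ℝ => NormedSpace.exp (t • T))
      (NormedSpace.exp (x • T) * T) x := hasDerivAt_exp_smul_const T x
  let lm : Matrix (Fin m) (Fin m) ℝ →ₗ[ℝ] ℝ :=
    { toFun := fun M => (M *ᵥ (fun _ => (1:ℝ))) i
      map_add' := fun A B => by simp [Matrix.add_mulVec]
      map_smul' := fun r A => by simp [Matrix.smul_mulVec] }
  exact (lm.toContinuousLinearMap.hasFDerivAt.comp_hasDerivAt x hd)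

/-- For an invertible C-PH generator `T` (nonnegative off-diagonal entries,
nonpositive row sums) and a nonnegative row vector `α` with `α·e ≤ 1`, we have
`α exp(xT) e → 0` as `x → ∞`; consequently the distribution function
`F(x) = 1 - α exp(xT) e` tends to 1 at infinity. -/
theorem CPH_cdf_tendsto_one {m : ℕ}
    (T : Matrix (Fin m) (Fin m) ℝ)
    (hmetzler : ∀ i j, i ≠ j → 0 ≤ T i j)
    (hrow : ∀ i, ∑ j, T i j ≤ 0)
    (hinv : IsUnit T)
    (α : Fin m → ℝ) (hα : ∀ i, 0 ≤ α i) (hαe : ∑ i, α i ≤ 1) :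
    Tendsto (fun x : ℝ => α ⬝ᵥ ((NormedSpace.exp (x • T)) *ᵥ (fun _ => (1 : ℝ))))
      atTop (nhds 0) ∧
    Tendsto (fun x : ℝ => 1 - α ⬝ᵥ ((NormedSpace.exp (x • T)) *ᵥ (fun _ => (1 : ℝ))))
      atTop (nhds 1) := by
  set e : Fin m → ℝ := fun _ => (1:ℝ) with he
  set g : ℝ → Fin m → ℝ := fun x => (NormedSpace.exp (x • T)) *ᵥ e with hg
  set D : ℝ → Fin m → ℝ := fun x => (NormedSpace.exp (x • T) * T) *ᵥ e with hD
  -- nonnegativity of g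
  have hgnn : ∀ x : ℝ, 0 ≤ x → ∀ i, 0 ≤ g x i := by
    intro x hx i
    rw [hg]
    simp only [Matrix.mulVec, dotProduct, he, mul_one]
    exact Finset.sum_nonneg fun j _ => exp_smul_entry_nonneg T hmetzler hx i j
  -- derivative is nonpositive for x ≥ 0
  have hDle : ∀ x : ℝ, 0 ≤ x → ∀ i, D x i ≤ 0 := by
    intro x hx i
    rw [hD]
    simp only
    rw [← Matrix.mulVec_mulVec]
    simp only [Matrix.mulVec, dotProduct, he, mul_one]
    apply Finset.sum_nonpos
    intro j _
    exact mul_nonpos_of_nonneg_of_nonpos (exp_smul_entry_nonneg T hmetzler hx i j) (hrow j)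
  have hderiv : ∀ i (x : ℝ), HasDerivAt (fun t => g t i) (D x i) x :=
    fun i x => hasDerivAt_exp_entry T i x
  -- antitone on [0, ∞)
  have hanti : ∀ i, AntitoneOn (fun x => g x i) (Set.Ici (0:ℝ)) := by
    intro i
    apply antitoneOn_of_deriv_nonpos (convex_Ici 0)
    · exact (continuous_iff_continuousAt.2 fun x => (hderiv i x).continuousAt).continuousOn
    · exact fun x _ => (hderiv i x).differentiableAt.differentiableWithinAt
    · intro x hx
      rw [(hderiv i x).deriv]
      rw [interior_Ici] at hx
      exact hDle x (le_of_lt hx) i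
  -- limits
  set G : Fin m → ℝ → ℝ := fun i x => g (max x 0) i with hG
  have hGanti : ∀ i, Antitone (G i) := by
    intro i a b hab
    exact hanti i (Set.mem_Ici.2 (le_max_right a 0)) (Set.mem_Ici.2 (le_max_right b 0))
      (max_le_max hab le_rfl)
  have hGbdd : ∀ i, BddBelow (Set.range (G i)) := by
    intro i
    refine ⟨0, fun y hy => ?_⟩
    obtain ⟨x, rfl⟩ := hy
    exact hgnn _ (le_max_right x 0) i
  set L : Fin m → ℝ := fun i => ⨅ x : ℝ, G i x with hL
  have hGt : ∀ i, Tendsto (G i) atTop (nhds (L i)) :=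
    fun i => tendsto_atTop_ciInf (hGanti i) (hGbdd i)
  have hgt : ∀ i, Tendsto (fun x => g x i) atTop (nhds (L i)) := by
    intro i
    apply (hGt i).congr'
    filter_upwards [eventually_ge_atTop (0:ℝ)] with x hx
    rw [hG]
    simp only
    rw [max_eq_left hx]
  -- T *ᵥ L = 0
  have hDrw : ∀ x i, D x i = ∑ j, T i j * g x j := by
    intro x i
    rw [hD]
    simp only
    rw [exp_comm_T, ← Matrix.mulVec_mulVec]
    rfl
  have hDt : ∀ i, Tendsto (fun x => D x i) atTop (nhds (∑ j, T i j * L j)) := by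
    intro i
    simp only [hDrw]
    exact tendsto_finset_sum _ fun j _ => (hgt j).const_mul (T i j)
  have hTL : ∀ i, ∑ j, T i j * L j = 0 := by
    intro i
    have hle : ∑ j, T i j * L j ≤ 0 := by
      apply le_of_tendsto (hDt i)
      filter_upwards [eventually_ge_atTop (0:ℝ)] with x hx
      exact hDle x hx i
    by_contra hne
    have hcc : ∑ j, T i j * L j < 0 := lt_of_le_of_ne hle hne
    set cc : ℝ := ∑ j, T i j * L j with hccdef
    obtain ⟨N₀, hN₀⟩ := eventually_atTop.mp
      ((hDt i).eventually_lt_const (show cc < cc/2 by linarith))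
    set N : ℝ := max N₀ 0 with hN
    have hN0 : (0:ℝ) ≤ N := le_max_right _ _
    set pf : ℝ → ℝ := fun x => g x i - (cc/2) * x with hpf
    have hpfd : ∀ x : ℝ, HasDerivAt pf (D x i - cc/2) x := by
      intro x
      have h2 : HasDerivAt (fun x : ℝ => (cc/2) * x) (cc/2) x := by
        simpa using (hasDerivAt_id x).const_mul (cc/2)
      exact (hderiv i x).sub h2
    have hpfanti : AntitoneOn pf (Set.Ici N) := by
      apply antitoneOn_of_deriv_nonpos (convex_Ici N)
      · exact (continuous_iff_continuousAt.2 fun x => (hpfd x).continuousAt).continuousOn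
      · exact fun x _ => (hpfd x).differentiableAt.differentiableWithinAt
      · intro x hx
        rw [(hpfd x).deriv]
        rw [interior_Ici] at hx
        have : D x i < cc/2 := hN₀ x (le_of_lt (lt_of_le_of_lt (le_max_left _ _) hx))
        linarith
    set x : ℝ := N + (2 / (-cc)) * (g N i + 1) with hx
    have hgN : 0 ≤ g N i := hgnn N hN0 i
    have hfrac : 0 < 2 / (-cc) := div_pos two_pos (by linarith)
    have hNx : N ≤ x := by
      rw [hx]; nlinarith
    have hphix : pf x ≤ pf N := hpfanti (Set.mem_Ici.2 le_rfl) (Set.mem_Ici.2 hNx) hNx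
    have hxcalc : (cc/2) * (x - N) = -(g N i + 1) := by
      rw [hx]
      have hccne : cc ≠ 0 := ne_of_lt hcc
      field_simp
      ring
    have hgx : 0 ≤ g x i := hgnn x (le_trans hN0 hNx) i
    rw [hpf] at hphix
    simp only at hphix
    nlinarith [hphix, hxcalc]
  have hL0 : ∀ j, L j = 0 := by
    obtain ⟨u, hu⟩ := hinv
    have h1 : T *ᵥ L = 0 := by
      funext i
      have := hTL i
      simpa [Matrix.mulVec, dotProduct] using this
    have h2 : L = (↑u⁻¹ : Matrix (Fin m) (Fin m) ℝ) *ᵥ (T *ᵥ L) := by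
      rw [Matrix.mulVec_mulVec, ← hu, Units.inv_mul, Matrix.one_mulVec]
    rw [h1, Matrix.mulVec_zero] at h2
    intro j
    rw [h2]
    rfl
  -- conclude
  have hmain : Tendsto (fun x : ℝ => α ⬝ᵥ g x) atTop (nhds 0) := by
    have h1 : Tendsto (fun x : ℝ => ∑ i, α i * g x i) atTop (nhds (∑ i, α i * L i)) :=
      tendsto_finset_sum _ fun i _ => (hgt i).const_mul (α i)
    have h2 : (∑ i, α i * L i) = 0 := by simp [hL0]
    rw [h2] at h1
    apply h1.congr
    intro x
    simp [dotProduct]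
  exact ⟨hmain, by simpa using hmain.const_sub 1⟩
end

section
/- Let M₃, M₄, M₅ be n×n real matrices with nonnegative entries, define R₍₀₎ = 0 and R₍ₖ₊₁₎ = M₄ + R₍ₖ₎ M₃ + R₍ₖ₎² M₅, and suppose there exists at least one n×n matrix with nonnegative entries satisfying the equation R = M₄ + R M₃ + R² M₅. Then the iterates R₍ₖ₎ converge entrywise to a matrix R_min which satisfies R_min = M₄ + R_min M₃ + R_min² M₅ and which is entrywise less than or equal to every nonnegative solution of this equation (i.e., R_min is the minimal nonnegative solution). -/
open Matrix Filter

private lemma mul_entry_le {n : ℕ} {A B C D : Matrix (Fin n) (Fin n) ℝ}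
    (hAB : ∀ i j, A i j ≤ B i j) (hCD : ∀ i j, C i j ≤ D i j)
    (hC : ∀ i j, 0 ≤ C i j) (hB : ∀ i j, 0 ≤ B i j) :
    ∀ i j, (A * C) i j ≤ (B * D) i j := by
  intro i j
  simp only [Matrix.mul_apply]
  exact Finset.sum_le_sum fun l _ =>
    mul_le_mul (hAB i l) (hCD l j) (hC l j) (hB i l)

/-- If the matrix-quadratic equation `R = M₄ + R M₃ + R² M₅` with nonnegative
coefficient matrices has at least one nonnegative solution, then the successive
substitution iterates converge entrywise to the minimal nonnegative solution. -/
theorem successive_substitution_tendsto_minimal_solution {n : ℕ}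
    (M3 M4 M5 : Matrix (Fin n) (Fin n) ℝ)
    (h3 : ∀ i j, 0 ≤ M3 i j) (h4 : ∀ i j, 0 ≤ M4 i j) (h5 : ∀ i j, 0 ≤ M5 i j)
    (R : ℕ → Matrix (Fin n) (Fin n) ℝ)
    (hR0 : R 0 = 0)
    (hRk : ∀ k : ℕ, R (k + 1) = M4 + R k * M3 + (R k) ^ 2 * M5)
    (hex : ∃ S : Matrix (Fin n) (Fin n) ℝ,
      (∀ i j, 0 ≤ S i j) ∧ S = M4 + S * M3 + S ^ 2 * M5) :
    ∃ Rmin : Matrix (Fin n) (Fin n) ℝ,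
      Tendsto R atTop (nhds Rmin) ∧
      Rmin = M4 + Rmin * M3 + Rmin ^ 2 * M5 ∧
      (∀ S : Matrix (Fin n) (Fin n) ℝ,
        (∀ i j, 0 ≤ S i j) → S = M4 + S * M3 + S ^ 2 * M5 →
        ∀ i j, Rmin i j ≤ S i j) := by
  -- nonnegativity of iterates
  have hnn : ∀ k, ∀ i j, 0 ≤ R k i j := by
    intro k
    induction k with
    | zero => simp [hR0]
    | succ k ih =>
      intro i j
      rw [hRk k]
      have h1 : 0 ≤ (R k * M3) i j := by
        simp only [Matrix.mul_apply]
        exact Finset.sum_nonneg fun l _ => mul_nonneg (ih i l) (h3 l j)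
      have h2 : 0 ≤ (R k ^ 2 * M5) i j := by
        rw [sq]
        simp only [Matrix.mul_apply]
        refine Finset.sum_nonneg fun l _ => mul_nonneg ?_ (h5 l j)
        exact Finset.sum_nonneg fun m _ => mul_nonneg (ih i m) (ih m l)
      simp only [Matrix.add_apply]
      have := h4 i j
      linarith
  -- monotone step
  have hmono_step : ∀ k, (∀ i j, R k i j ≤ R (k+1) i j) := by
    intro k
    induction k with
    | zero => intro i j; rw [hR0]; exact hnn 1 i j
    | succ k ih =>
      intro i j
      rw [hRk k, hRk (k+1)]
      have h1 := mul_entry_le ih (fun i j => le_refl (M3 i j)) h3 (hnn (k+1)) i j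
      have h2 : (R k ^ 2 * M5) i j ≤ (R (k+1) ^ 2 * M5) i j := by
        rw [sq, sq]
        exact mul_entry_le (mul_entry_le ih ih (hnn k) (hnn (k+1)))
          (fun i j => le_refl (M5 i j)) h5
          (fun i j => by
            simp only [Matrix.mul_apply]
            exact Finset.sum_nonneg fun l _ =>
              mul_nonneg (hnn (k+1) i l) (hnn (k+1) l j)) i j
      simp only [Matrix.add_apply]
      linarith
  have hmono : ∀ i j, Monotone fun k => R k i j := by
    intro i j
    exact monotone_nat_of_le_succ fun k => hmono_step k i j
  -- bounded by any solution
  have hbdd : ∀ S : Matrix (Fin n) (Fin n) ℝ,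
      (∀ i j, 0 ≤ S i j) → S = M4 + S * M3 + S ^ 2 * M5 →
      ∀ k i j, R k i j ≤ S i j := by
    intro S hS hSeq k
    induction k with
    | zero => intro i j; rw [hR0]; exact hS i j
    | succ k ih =>
      intro i j
      rw [hRk k, hSeq]
      have h1 := mul_entry_le ih (fun i j => le_refl (M3 i j)) h3 hS i j
      have h2 : (R k ^ 2 * M5) i j ≤ (S ^ 2 * M5) i j := by
        rw [sq, sq]
        exact mul_entry_le (mul_entry_le ih ih (hnn k) hS)
          (fun i j => le_refl (M5 i j)) h5
          (fun i j => by
            simp only [Matrix.mul_apply]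
            exact Finset.sum_nonneg fun l _ => mul_nonneg (hS i l) (hS l j)) i j
      simp only [Matrix.add_apply]
      linarith
  obtain ⟨S₀, hS₀, hS₀eq⟩ := hex
  have hBdd : ∀ i j, BddAbove (Set.range fun k => R k i j) := by
    intro i j
    exact ⟨S₀ i j, by rintro x ⟨k, rfl⟩; exact hbdd S₀ hS₀ hS₀eq k i j⟩
  set Rmin : Matrix (Fin n) (Fin n) ℝ := fun i j => ⨆ k, R k i j with hRmin
  have htend : Tendsto R atTop (nhds Rmin) := by
    refine tendsto_pi_nhds.2 ?_
    intro i
    rw [tendsto_pi_nhds]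
    intro j
    exact tendsto_atTop_ciSup (hmono i j) (hBdd i j)
  refine ⟨Rmin, htend, ?_, ?_⟩
  · -- fixed point via continuity
    have hcont : Continuous fun A : Matrix (Fin n) (Fin n) ℝ =>
        M4 + A * M3 + A ^ 2 * M5 := by
      have : Continuous fun A : Matrix (Fin n) (Fin n) ℝ =>
          M4 + A * M3 + (A * A) * M5 :=
        (continuous_const.add (continuous_id.matrix_mul continuous_const)).add
          ((continuous_id.matrix_mul continuous_id).matrix_mul continuous_const)
      simpa [sq] using this
    have h1 : Tendsto (fun k => R (k + 1)) atTop (nhds Rmin) :=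
      htend.comp (tendsto_add_atTop_nat 1)
    have h2 : Tendsto (fun k => M4 + R k * M3 + (R k) ^ 2 * M5) atTop
        (nhds (M4 + Rmin * M3 + Rmin ^ 2 * M5)) := hcont.continuousAt.tendsto.comp htend
    have h3' : Tendsto (fun k => R (k + 1)) atTop
        (nhds (M4 + Rmin * M3 + Rmin ^ 2 * M5)) := by
      simpa only [← hRk] using h2
    exact tendsto_nhds_unique h1 h3'
  · intro S hS hSeq i j
    exact ciSup_le fun k => hbdd S hS hSeq k i j
end
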